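/- Let K be a differential field of characteristic 0 with field of constants C, and L = K⟨η_1,...,η_n⟩ a Picard-Vessiot extension of K where η_1,...,η_n are C-linearly independent. Let C̄ be an algebraic closure of C and L̄ = L·C̄. Then for every K-differential morphism σ : L → L̄ there exist unique constants c_{ij} ∈ C̄ (1 ≤ i,j ≤ n) such that σ(η_j) = Σ_{i=1}^n c_{ij} η_i for all j, and the matrix (c_{ij}) lies in GL(n, C̄). -/

import Mathlib

/-!
Common setup: differential fields realized as subfields of an ambient field `M`
of characteristic zero equipped with a derivation `D`.
-/

namespace PVGalois

variable {M : Type*} [Field M]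

/-- `D` is a derivation on the field `M`. -/
structure IsDerivation (D : M → M) : Prop where
  map_add : ∀ a b : M, D (a + b) = D a + D b
  leibniz : ∀ a b : M, D (a * b) = a * D b + D a * b

/-- A subfield `F` of `M` is a differential subfield if it is closed under `D`. -/
def DiffClosed (D : M → M) (F : Subfield M) : Prop :=
  ∀ x ∈ F, D x ∈ F

/-- The set of constants of the differential subfield `F`. -/
def constantsOf (D : M → M) (F : Subfield M) : Set M :=
  {x | x ∈ F ∧ D x = 0}

/-- `L` is differentially generated over `K` by the set `S`:
`L` is the smallest differential subfield containing `K` and `S`. -/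
def IsDiffGenBy (D : M → M) (K : Subfield M) (S : Set M) (L : Subfield M) : Prop :=
  K ≤ L ∧ S ⊆ (L : Set M) ∧ DiffClosed D L ∧
    ∀ F : Subfield M, K ≤ F → S ⊆ (F : Set M) → DiffClosed D F → L ≤ F

/-- `y` is a solution of the homogeneous linear differential equation
`Y⁽ⁿ⁾ + a_{n-1} Y⁽ⁿ⁻¹⁾ + ⋯ + a_1 Y' + a_0 Y = 0`. -/
def IsSolution (D : M → M) (n : ℕ) (a : Fin n → M) (y : M) : Prop :=
  D^[n] y + ∑ i : Fin n, a i * D^[(i : ℕ)] y = 0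

/-- A family `v` is linearly independent over the set of scalars `A ⊆ M`. -/
def LinIndepOver {ι : Type*} (A : Set M) (v : ι → M) : Prop :=
  ∀ (s : Finset ι) (c : ι → M), (∀ i, c i ∈ A) →
    ∑ i ∈ s, c i * v i = 0 → ∀ i ∈ s, c i = 0

/-- Every element of `T` is a finite linear combination of the family `v`
with coefficients in `A`. -/
def SpansOver {ι : Type*} (A : Set M) (v : ι → M) (T : Set M) : Prop :=
  ∀ x ∈ T, ∃ (s : Finset ι) (c : ι → M), (∀ i, c i ∈ A) ∧ x = ∑ i ∈ s, c i * v i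

/-- `Cb` is an algebraic closure of the set `C` inside `M`:
it contains `C`, is algebraic over `C`, and is algebraically closed. -/
def IsAlgClosureOf (C : Set M) (Cb : Subfield M) : Prop :=
  C ⊆ (Cb : Set M) ∧
  (∀ x ∈ Cb, ∃ p : Polynomial M, p ≠ 0 ∧ (∀ k, p.coeff k ∈ C) ∧ p.eval x = 0) ∧
  (∀ p : Polynomial M, 0 < p.degree → (∀ k, p.coeff k ∈ Cb) → ∃ x ∈ Cb, p.eval x = 0)

/-- `L|K` is a Picard-Vessiot extension for the equation with coefficients `a`,
with fundamental system of solutions `η`. -/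
def IsPicardVessiotWith (D : M → M) (K L : Subfield M) (n : ℕ) (a : Fin n → M)
    (η : Fin n → M) : Prop :=
  (∀ i, a i ∈ K) ∧ (∀ j, IsSolution D n a (η j)) ∧
  LinIndepOver (constantsOf D L) η ∧
  IsDiffGenBy D K (Set.range η) L ∧
  constantsOf D L = constantsOf D K

/-- `L|K` is a Picard-Vessiot extension for the equation with coefficients `a`. -/
def IsPicardVessiot (D : M → M) (K L : Subfield M) (n : ℕ) (a : Fin n → M) : Prop :=
  ∃ η : Fin n → M, IsPicardVessiotWith D K L n a η

/-- A `K`-differential morphism from `L` into `Lb`: a ring homomorphism defined on `L`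
with values in `Lb`, fixing `K` pointwise and commuting with the derivation `D`. -/
def IsDiffHom (D : M → M) (K L Lb : Subfield M) (σ : ↥L →+* M) : Prop :=
  (∀ x, σ x ∈ Lb) ∧ (∀ x : ↥L, (x : M) ∈ K → σ x = (x : M)) ∧
  ∀ (x : M) (hx : x ∈ L) (hx' : D x ∈ L), σ ⟨D x, hx'⟩ = D (σ ⟨x, hx⟩)

/-- A `Kb`-differential automorphism of `Lb`: a `Kb`-differential morphism of `Lb`
into itself which is onto `Lb`. -/
def IsDiffAut (D : M → M) (Kb Lb : Subfield M) (τ : ↥Lb →+* M) : Prop :=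
  IsDiffHom D Kb Lb Lb τ ∧ ∀ y ∈ Lb, ∃ x : ↥Lb, τ x = y

end PVGalois

/-!
Every element of `Cb` is algebraic over the constants, hence (in characteristic zero) itself a
constant. As `Cb` is algebraic over `L`, the field `L ⊔ Cb` is the `L`-span of `Cb`; it is closed
under `D`, and its constants lie in `Cb`. By the Wronskian criterion (elements of a differential
field are linearly dependent over its constants iff their Wronskian vanishes), the `n + 1` solutions
`η₁, …, ηₙ, σ(η_j)` of the order-`n` equation in `L ⊔ Cb` give `σ(η_j) = ∑ c_{ij} η_i` with
constants `c_{ij} ∈ Cb`, uniquely since `W(η) ≠ 0`. Finally `W(σ η) = σ(W(η)) ≠ 0`, so the `σ(η_j)`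
are independent over the constants and `(c_{ij})` is invertible.
-/

namespace PVGalois

variable {M : Type*} [Field M] {D : M → M}

open Matrix

namespace IsDerivation

variable (hD : IsDerivation D)
include hD

theorem map_zero : D 0 = 0 := by
  simpa using (hD.map_add 0 0).symm

theorem map_one : D 1 = 0 := by
  simpa using hD.leibniz 1 1

theorem map_neg (a : M) : D (-a) = -D a :=
  eq_neg_of_add_eq_zero_left <| by rw [← hD.map_add, neg_add_cancel, hD.map_zero]

theorem map_inv_eq_zero {a : M} (ha : D a = 0) : D a⁻¹ = 0 := by
  rcases eq_or_ne a 0 with rfl | ha0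
  · simpa using hD.map_zero
  · have h := hD.leibniz a a⁻¹
    rw [mul_inv_cancel₀ ha0, hD.map_one, ha, zero_mul, add_zero] at h
    exact (mul_eq_zero.mp h.symm).resolve_left ha0

def constField : Subfield M where
  carrier := {x | D x = 0}
  mul_mem' {a b} ha hb := by simp_all [hD.leibniz]
  one_mem' := hD.map_one
  add_mem' {a b} ha hb := by simp_all [hD.map_add]
  zero_mem' := hD.map_zero
  neg_mem' {a} ha := by simp_all [hD.map_neg]
  inv_mem' _ := hD.map_inv_eq_zero

def toDerivation : Derivation hD.constField M M :=
  Derivation.mk'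
    { toFun := D
      map_add' := hD.map_add
      map_smul' := fun c x => by
        simp [Subfield.smul_def, hD.leibniz, show D c = 0 from c.2] }
    fun a b => by simp [hD.leibniz, mul_comm]

@[simp]
theorem toDerivation_apply (x : M) : hD.toDerivation x = D x := rfl

theorem map_sum {ι : Type*} (s : Finset ι) (f : ι → M) :
    D (∑ i ∈ s, f i) = ∑ i ∈ s, D (f i) :=
  _root_.map_sum hD.toDerivation f s

theorem map_sum_mul_const (T : Finset M) (l : M → M) (hT : ∀ b ∈ T, D b = 0) :
    D (∑ b ∈ T, l b * b) = ∑ b ∈ T, D (l b) * b := by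
  rw [hD.map_sum]
  exact Finset.sum_congr rfl fun b hb => by rw [hD.leibniz, hT b hb, mul_zero, zero_add]

theorem iterate_sum_const_mul {ι : Type*} (s : Finset ι) (c u : ι → M)
    (hc : ∀ i ∈ s, D (c i) = 0) (k : ℕ) :
    D^[k] (∑ i ∈ s, c i * u i) = ∑ i ∈ s, c i * D^[k] (u i) := by
  induction k with
  | zero => rfl
  | succ k ih =>
    simp only [Function.iterate_succ_apply', ih, hD.map_sum]
    exact Finset.sum_congr rfl fun i hi => by rw [hD.leibniz, hc i hi, zero_mul, add_zero]

/-- Differentiating `p(x) = 0` for the minimal polynomial `p` of `x`, separable in characteristic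
zero, gives `p'(x) x' = 0` with `p'(x) ≠ 0`. -/
theorem eq_zero_of_isAlgebraic [CharZero M] {x : M} (hx : IsAlgebraic hD.constField x) :
    D x = 0 := by
  have hsep := (minpoly.irreducible hx.isIntegral).separable
  have h := hD.toDerivation.map_aeval (minpoly hD.constField x) x
  rw [minpoly.aeval, _root_.map_zero, toDerivation_apply, smul_eq_mul, eq_comm, mul_eq_zero] at h
  exact h.resolve_left (hsep.aeval_derivative_ne_zero (minpoly.aeval _ x))

end IsDerivation

theorem IsAlgClosureOf.isAlgebraic {C : Set M} {Cb F : Subfield M} (hCb : IsAlgClosureOf C Cb)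
    (hC : C ⊆ F) {b : M} (hb : b ∈ Cb) : IsAlgebraic F b := by
  obtain ⟨p, hp0, hpC, hpb⟩ := hCb.2.1 b hb
  obtain ⟨q, hq⟩ := (Polynomial.mem_lifts p).mp <|
    (Polynomial.lifts_iff_coeff_lifts (f := algebraMap F M) p).mpr
      fun k => ⟨⟨p.coeff k, hC (hpC k)⟩, rfl⟩
  refine ⟨q, fun h => hp0 (by rw [← hq, h, Polynomial.map_zero]), ?_⟩
  rw [Polynomial.aeval_def, ← Polynomial.eval_map, hq, hpb]

theorem IsAlgClosureOf.le_constField [CharZero M] (hD : IsDerivation D) {C : Set M}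
    {Cb : Subfield M} (hCb : IsAlgClosureOf C Cb) (hC : C ⊆ hD.constField) :
    Cb ≤ hD.constField :=
  fun _ hb => hD.eq_zero_of_isAlgebraic (hCb.isAlgebraic hC hb)

theorem DiffClosed.iterate_mem {F : Subfield M} (hF : DiffClosed D F) {x : M} (hx : x ∈ F)
    (k : ℕ) : D^[k] x ∈ F := by
  induction k with
  | zero => exact hx
  | succ k ih => rw [Function.iterate_succ_apply']; exact hF _ ih

theorem Subfield.exists_mem_mulVec_eq_zero {n : Type*} [Fintype n] [DecidableEq n]
    {F : Subfield M} {A : Matrix n n M} (hA : ∀ i j, A i j ∈ F) (h : A.det = 0) :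
    ∃ v : n → M, v ≠ 0 ∧ (∀ i, v i ∈ F) ∧ A *ᵥ v = 0 := by
  let A' : Matrix n n F := of fun i j => ⟨A i j, hA i j⟩
  have hA' : A'.map F.subtype = A := rfl
  have hdet : A'.det = 0 :=
    F.subtype_injective (by rw [RingHom.map_det, RingHom.mapMatrix_apply, hA', h, map_zero])
  obtain ⟨v, hv0, hv⟩ := exists_mulVec_eq_zero_iff.mpr hdet
  refine ⟨F.subtype ∘ v, fun h => hv0 (funext fun i => F.subtype_injective (congrFun h i)),
    fun i => (v i).2, funext fun i => ?_⟩
  rw [← hA', ← RingHom.map_mulVec, hv]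
  rfl

def wronskian (D : M → M) {m : ℕ} (u : Fin m → M) : Matrix (Fin m) (Fin m) M :=
  of fun k i => D^[k] (u i)

theorem wronskian_mulVec_apply {m : ℕ} (u w : Fin m → M) (k : Fin m) :
    (wronskian D u *ᵥ w) k = ∑ i, D^[k] (u i) * w i := rfl

theorem wronskian_mulVec_castSucc {m : ℕ} (u w : Fin (m + 1) → M) (k : Fin m) :
    (wronskian D u *ᵥ w) k.castSucc =
      (wronskian D (Fin.init u) *ᵥ Fin.init w) k + D^[k] (u (Fin.last m)) * w (Fin.last m) := by
  simp [wronskian_mulVec_apply, Fin.sum_univ_castSucc, Fin.init]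

theorem det_wronskian_eq_zero_of_isSolution {n : ℕ} {a : Fin n → M} {u : Fin (n + 1) → M}
    (hu : ∀ i, IsSolution D n a (u i)) : (wronskian D u).det = 0 := by
  refine exists_vecMul_eq_zero_iff.mp
    ⟨Fin.snoc a 1, fun h => by simpa using congrFun h (Fin.last n), funext fun i => ?_⟩
  simpa [IsSolution, vecMul, dotProduct, wronskian, Fin.sum_univ_castSucc, add_comm] using hu i

theorem exists_wronskian_mulVec_eq_zero_of_last_eq_one {F : Subfield M} (hF : DiffClosed D F)
    {m : ℕ} {u : Fin (m + 1) → M} (hu : ∀ i, u i ∈ F) (hW : (wronskian D u).det = 0)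
    (hW' : (wronskian D (Fin.init u)).det ≠ 0) :
    ∃ f : Fin (m + 1) → M, (∀ i, f i ∈ F) ∧ f (Fin.last m) = 1 ∧ wronskian D u *ᵥ f = 0 := by
  obtain ⟨e, he0, heF, he⟩ :=
    Subfield.exists_mem_mulVec_eq_zero (A := wronskian D u) (fun k i => hF.iterate_mem (hu i) k) hW
  have hlast : e (Fin.last m) ≠ 0 := by
    intro hlast
    refine he0 (funext fun i => Fin.lastCases hlast (fun i => ?_) i)
    refine congrFun (eq_zero_of_mulVec_eq_zero (v := Fin.init e) hW' (funext fun k => ?_)) i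
    simpa [wronskian_mulVec_castSucc, hlast] using congrFun he k.castSucc
  refine ⟨(e (Fin.last m))⁻¹ • e, fun i => mul_mem (inv_mem (heF _)) (heF i),
    inv_mul_cancel₀ hlast, ?_⟩
  rw [mulVec_smul, he, smul_zero]

namespace IsDerivation

variable (hD : IsDerivation D)
include hD

theorem wronskian_mulVec_eq_zero {m : ℕ} {u c : Fin m → M} (hc : ∀ i, D (c i) = 0)
    (h : ∑ i, c i * u i = 0) : wronskian D u *ᵥ c = 0 := by
  funext k
  have := hD.iterate_sum_const_mul Finset.univ c u (fun i _ => hc i) k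
  rw [h, Function.iterate_fixed hD.map_zero] at this
  simpa [wronskian_mulVec_apply, mul_comm] using this.symm

theorem eq_zero_of_det_wronskian_ne_zero {m : ℕ} {u c : Fin m → M}
    (hW : (wronskian D u).det ≠ 0) (hc : ∀ i, D (c i) = 0) (h : ∑ i, c i * u i = 0) : c = 0 :=
  eq_zero_of_mulVec_eq_zero hW (hD.wronskian_mulVec_eq_zero hc h)

theorem map_sum_iterate_mul {m : ℕ} (u w : Fin m → M) (k : ℕ) :
    D (∑ i, D^[k] (u i) * w i) = ∑ i, D^[k + 1] (u i) * w i + ∑ i, D^[k] (u i) * D (w i) := by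
  rw [hD.map_sum, ← Finset.sum_add_distrib]
  exact Finset.sum_congr rfl fun i _ => by
    rw [hD.leibniz, Function.iterate_succ_apply', add_comm]

/-- Differentiate row `k` of `W(u) f = 0` and subtract row `k + 1`. -/
theorem wronskian_init_mulVec_derivative {m : ℕ}
    {u f : Fin (m + 1) → M} (hf : wronskian D u *ᵥ f = 0) (hlast : D (f (Fin.last m)) = 0) :
    wronskian D (Fin.init u) *ᵥ (fun i => D (f i.castSucc)) = 0 := by
  funext k
  have hrow : ∑ i, D^[k] (u i) * D (f i) = 0 := by
    have h := hD.map_sum_iterate_mul u f k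
    have hk : ∑ i, D^[k] (u i) * f i = 0 := congrFun hf k.castSucc
    have hsucc : ∑ i, D^[k + 1] (u i) * f i = 0 := congrFun hf k.succ
    rwa [hk, hD.map_zero, hsucc, zero_add, eq_comm] at h
  simpa [wronskian_mulVec_apply, Fin.sum_univ_castSucc, hlast, Fin.init] using hrow

theorem exists_const_sum_eq_zero_of_det_wronskian_eq_zero {F : Subfield M} (hF : DiffClosed D F)
    {m : ℕ} (u : Fin m → M) (hu : ∀ i, u i ∈ F)
    (hW : (wronskian D u).det = 0) :
    ∃ c : Fin m → M, c ≠ 0 ∧ (∀ i, c i ∈ constantsOf D F) ∧ ∑ i, c i * u i = 0 := by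
  induction m with
  | zero => simp at hW
  | succ m ih =>
    by_cases hW' : (wronskian D (Fin.init u)).det = 0
    · obtain ⟨c, hc0, hcF, hc⟩ := ih (Fin.init u) (fun i => hu _) hW'
      have hcF' : ∀ i, Fin.snoc (α := fun _ => M) c 0 i ∈ constantsOf D F :=
        Fin.lastCases (by simpa using ⟨zero_mem F, hD.map_zero⟩) (fun i => by simpa using hcF i)
      refine ⟨Fin.snoc c 0, fun h => hc0 (funext fun i => by simpa using congrFun h i.castSucc),
        hcF', ?_⟩
      simpa [Fin.sum_univ_castSucc, Fin.init] using hc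
    · obtain ⟨f, hfF, hf1, hf⟩ := exists_wronskian_mulVec_eq_zero_of_last_eq_one hF hu hW hW'
      have hlast : D (f (Fin.last m)) = 0 := by rw [hf1, hD.map_one]
      have hinit := eq_zero_of_mulVec_eq_zero hW'
        (hD.wronskian_init_mulVec_derivative hf hlast)
      refine ⟨f, fun h => by simpa [hf1] using congrFun h (Fin.last m),
        fun i => ⟨hfF i, Fin.lastCases hlast (fun i => congrFun hinit i) i⟩, ?_⟩
      simpa [wronskian_mulVec_apply, mul_comm] using congrFun hf 0

theorem det_wronskian_ne_zero_of_linIndepOver {F : Subfield M} (hF : DiffClosed D F) {m : ℕ}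
    {u : Fin m → M} (hu : ∀ i, u i ∈ F) (hind : LinIndepOver (constantsOf D F) u) :
    (wronskian D u).det ≠ 0 := by
  intro hW
  obtain ⟨c, hc0, hcF, hc⟩ := hD.exists_const_sum_eq_zero_of_det_wronskian_eq_zero hF u hu hW
  exact hc0 (funext fun i => hind Finset.univ c hcF hc i (Finset.mem_univ i))

theorem exists_const_coeffs_of_isSolution {F : Subfield M} (hF : DiffClosed D F) {n : ℕ}
    {a : Fin n → M} {η : Fin n → M} {y : M} (hηF : ∀ i, η i ∈ F) (hyF : y ∈ F)
    (hη : ∀ i, IsSolution D n a (η i)) (hy : IsSolution D n a y)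
    (hW : (wronskian D η).det ≠ 0) :
    ∃ c : Fin n → M, (∀ i, c i ∈ constantsOf D F) ∧ y = ∑ i, c i * η i := by
  obtain ⟨e, he0, heF, he⟩ := hD.exists_const_sum_eq_zero_of_det_wronskian_eq_zero hF
    (Fin.snoc η y) (Fin.lastCases (by simpa using hyF) (by simpa using hηF))
    (det_wronskian_eq_zero_of_isSolution (Fin.lastCases (by simpa using hy) (by simpa using hη)))
  simp only [Fin.sum_univ_castSucc, Fin.snoc_castSucc, Fin.snoc_last] at he
  have hlast : e (Fin.last n) ≠ 0 := by
    intro h0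
    refine he0 (funext fun i => Fin.lastCases h0 (fun i => ?_) i)
    exact congrFun (hD.eq_zero_of_det_wronskian_ne_zero (c := fun i => e i.castSucc) hW
      (fun i => (heF _).2) (by simpa [h0] using he)) i
  refine ⟨fun i => -(e i.castSucc / e (Fin.last n)), fun i => ?_, ?_⟩
  · exact ⟨neg_mem (div_mem (heF _).1 (heF _).1),
      hD.constField.neg_mem (hD.constField.div_mem (heF _).2 (heF _).2)⟩
  · have hsum : ∑ i, -(e i.castSucc / e (Fin.last n)) * η i
        = -(∑ i, e i.castSucc * η i) / e (Fin.last n) := by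
      rw [neg_div, Finset.sum_div, ← Finset.sum_neg_distrib]
      exact Finset.sum_congr rfl fun i _ => by ring
    rw [hsum, eq_div_iff hlast]
    linear_combination he

theorem eq_of_sum_mul_eq_of_det_wronskian_ne_zero {m : ℕ} {u c c' : Fin m → M}
    (hW : (wronskian D u).det ≠ 0) (hc : ∀ i, c i ∈ hD.constField)
    (hc' : ∀ i, c' i ∈ hD.constField) (h : ∑ i, c i * u i = ∑ i, c' i * u i) : c = c' := by
  have := hD.eq_zero_of_det_wronskian_ne_zero (c := c - c') hW
    (fun i => sub_mem (hc i) (hc' i)) (by simp [sub_mul, Finset.sum_sub_distrib, h])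
  exact sub_eq_zero.mp this

theorem det_ne_zero_of_det_wronskian_ne_zero {n : ℕ} {η y : Fin n → M}
    {c : Matrix (Fin n) (Fin n) M} (hc : ∀ i j, c i j ∈ hD.constField)
    (hy : ∀ j, y j = ∑ i, c i j * η i) (hW : (wronskian D y).det ≠ 0) : c.det ≠ 0 := by
  intro hdet
  obtain ⟨d, hd0, hdC, hd⟩ := Subfield.exists_mem_mulVec_eq_zero hc hdet
  refine hd0 (hD.eq_zero_of_det_wronskian_ne_zero hW hdC ?_)
  calc ∑ j, d j * y j = ∑ i, (c *ᵥ d) i * η i := by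
        simp only [hy, mulVec, dotProduct, Finset.mul_sum, Finset.sum_mul]
        rw [Finset.sum_comm]
        exact Finset.sum_congr rfl fun i _ => Finset.sum_congr rfl fun j _ => by ring
    _ = 0 := by simp [hd]

end IsDerivation

/-- As `Cb` is algebraic over `L`, the field `L ⊔ Cb` is the ring `L[Cb]`, i.e. the `L`-span of the
multiplicatively closed set `Cb`. -/
theorem exists_sum_eq_of_mem_sup {L Cb : Subfield M} (halg : ∀ b ∈ Cb, IsAlgebraic L b)
    {x : M} (hx : x ∈ L ⊔ Cb) :
    ∃ (T : Finset M) (l : M → M), ↑T ⊆ (Cb : Set M) ∧ (∀ b, l b ∈ L) ∧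
      x = ∑ b ∈ T, l b * b := by
  let E := IntermediateField.adjoin L (Cb : Set M)
  have hLE : L ⊔ Cb ≤ E.toSubfield :=
    sup_le (fun l hl => E.algebraMap_mem ⟨l, hl⟩)
      (fun b hb => IntermediateField.subset_adjoin _ _ hb)
  have hxE : x ∈ E.toSubalgebra := hLE hx
  rw [IntermediateField.adjoin_toSubalgebra_of_isAlgebraic halg, ← Subalgebra.mem_toSubmodule,
    Algebra.adjoin_eq_span, ← Cb.coe_toSubmonoid, Submonoid.closure_eq] at hxE
  obtain ⟨f, T, hT, -, rfl⟩ := Submodule.mem_span_iff_exists_finset_subset.mp hxE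
  exact ⟨T, fun b => f b, hT, fun b => (f b).2, rfl⟩

theorem DiffClosed.sup (hD : IsDerivation D) {L Cb : Subfield M} (hL : DiffClosed D L)
    (hCb : Cb ≤ hD.constField) (halg : ∀ b ∈ Cb, IsAlgebraic L b) : DiffClosed D (L ⊔ Cb) := by
  intro x hx
  obtain ⟨T, l, hT, hl, rfl⟩ := exists_sum_eq_of_mem_sup halg hx
  rw [hD.map_sum_mul_const T l fun b hb => hCb (hT hb)]
  exact sum_mem fun b hb =>
    mul_mem (le_sup_left (a := L) (hL _ (hl b))) (le_sup_right (a := L) (hT hb))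

/-- If `∑ l_b b` is constant but some `l_β` is not, subtracting `l_β / l_β'` times the relation
`∑ l_b' b = 0` kills the `β`-term, so the number of terms drops. -/
theorem IsDerivation.sum_mul_mem_of_derivative_eq_zero (hD : IsDerivation D) {L Cb : Subfield M}
    (hL : DiffClosed D L) (hCb : Cb ≤ hD.constField) (hconst : constantsOf D L ⊆ Cb)
    (T : Finset M) (l : M → M) (hT : ↑T ⊆ (Cb : Set M)) (hl : ∀ b, l b ∈ L)
    (h : D (∑ b ∈ T, l b * b) = 0) : ∑ b ∈ T, l b * b ∈ Cb := by
  induction T using Finset.strongInduction generalizing l with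
  | H T ih =>
  classical
  have hrel : ∑ b ∈ T, D (l b) * b = 0 := by
    rwa [← hD.map_sum_mul_const T l fun b hb => hCb (hT hb)]
  by_cases hall : ∀ b ∈ T, D (l b) = 0
  · exact sum_mem fun b hb => mul_mem (hconst ⟨hl b, hall b hb⟩) (hT hb)
  obtain ⟨β, hβ, hβ0⟩ : ∃ β ∈ T, D (l β) ≠ 0 := by simpa using hall
  set l' : M → M := fun b => l b - l β / D (l β) * D (l b) with hl'
  have hsum : ∑ b ∈ T, l b * b = ∑ b ∈ T.erase β, l' b * b := by
    have hβ' : l' β * β = 0 := by simp [hl', div_mul_cancel₀ _ hβ0]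
    rw [Finset.sum_erase T (f := fun b => l' b * b) hβ']
    simp only [hl', sub_mul, Finset.sum_sub_distrib, mul_assoc, ← Finset.mul_sum, hrel,
      mul_zero, sub_zero]
  rw [hsum] at h ⊢
  exact ih _ (Finset.erase_ssubset hβ) l' (fun b hb => hT (Finset.mem_of_mem_erase hb))
    (fun b => sub_mem (hl b) (mul_mem (div_mem (hl β) (hL _ (hl β))) (hL _ (hl b)))) h

theorem IsDerivation.constantsOf_sup_subset (hD : IsDerivation D) {L Cb : Subfield M}
    (hL : DiffClosed D L) (hCb : Cb ≤ hD.constField) (halg : ∀ b ∈ Cb, IsAlgebraic L b)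
    (hconst : constantsOf D L ⊆ Cb) : constantsOf D (L ⊔ Cb) ⊆ Cb := by
  rintro x ⟨hx, hDx⟩
  obtain ⟨T, l, hT, hl, rfl⟩ := exists_sum_eq_of_mem_sup halg hx
  exact hD.sum_mul_mem_of_derivative_eq_zero hL hCb hconst T l hT hl hDx

namespace IsDiffHom

variable {K L Lb : Subfield M} {σ : L →+* M} (hσ : IsDiffHom D K L Lb σ) (hL : DiffClosed D L)
include hσ hL

theorem map_iterate {x : M} (hx : x ∈ L) (k : ℕ) :
    σ ⟨D^[k] x, hL.iterate_mem hx k⟩ = D^[k] (σ ⟨x, hx⟩) := by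
  induction k with
  | zero => rfl
  | succ k ih =>
    rw [Function.iterate_succ_apply' D k (σ _), ← ih,
      ← hσ.2.2 _ (hL.iterate_mem hx k) (hL _ (hL.iterate_mem hx k))]
    simp only [Function.iterate_succ_apply']

theorem isSolution_map (hKL : K ≤ L) {n : ℕ} {a : Fin n → M} (ha : ∀ i, a i ∈ K) {x : M}
    (hx : x ∈ L) (hsol : IsSolution D n a x) : IsSolution D n a (σ ⟨x, hx⟩) := by
  have h : (⟨D^[n] x, hL.iterate_mem hx n⟩ +
      ∑ i, ⟨a i, hKL (ha i)⟩ * ⟨D^[i] x, hL.iterate_mem hx i⟩ : L) = 0 :=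
    Subtype.ext (by simpa [IsSolution] using hsol)
  have h' := congrArg σ h
  rw [map_add, map_sum, map_zero, hσ.map_iterate hL hx n] at h'
  rw [IsSolution, ← h']
  congr 1
  refine Finset.sum_congr rfl fun i _ => ?_
  rw [map_mul, hσ.map_iterate hL hx, hσ.2.1 ⟨a i, hKL (ha i)⟩ (ha i)]

theorem det_wronskian_ne_zero {m : ℕ} {u : Fin m → M} (hu : ∀ i, u i ∈ L)
    (hW : (wronskian D u).det ≠ 0) : (wronskian D fun i => σ ⟨u i, hu i⟩).det ≠ 0 := by
  let W : Matrix (Fin m) (Fin m) L := Matrix.of fun k i => ⟨D^[k] (u i), hL.iterate_mem (hu i) k⟩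
  have hWL : L.subtype.mapMatrix W = wronskian D u := rfl
  have hWσ : σ.mapMatrix W = wronskian D fun i => σ ⟨u i, hu i⟩ := by
    ext k i
    exact hσ.map_iterate hL (hu i) k
  rw [← hWσ, ← RingHom.map_det, map_ne_zero]
  rintro h
  exact hW (by rw [← hWL, ← RingHom.map_det, h, map_zero])

end IsDiffHom

end PVGalois

open PVGalois

theorem statement_4_general {M : Type*} [Field M] [CharZero M] (D : M → M) (hD : IsDerivation D)
    (K L : Subfield M) (hKL : K ≤ L)
    (n : ℕ) (a : Fin n → M) (η : Fin n → M) (hηL : ∀ j, η j ∈ L)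
    (hPV : IsPicardVessiotWith D K L n a η)
    (Cb : Subfield M) (hCb : IsAlgClosureOf (constantsOf D K) Cb) :
    ∀ σ : ↥L →+* M, IsDiffHom D K L (L ⊔ Cb) σ →
      ∃ c : Matrix (Fin n) (Fin n) M,
        (∀ i j, c i j ∈ Cb) ∧
        (∀ j, σ ⟨η j, hηL j⟩ = ∑ i, c i j * η i) ∧
        c.det ≠ 0 ∧
        ∀ c' : Matrix (Fin n) (Fin n) M, (∀ i j, c' i j ∈ Cb) →
          (∀ j, σ ⟨η j, hηL j⟩ = ∑ i, c' i j * η i) → c' = c := by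
  intro σ hσ
  obtain ⟨ha, hsol, hind, ⟨-, -, hL, -⟩, hconst⟩ := hPV
  have hCbD : Cb ≤ hD.constField := hCb.le_constField hD fun x hx => hx.2
  have halg : ∀ b ∈ Cb, IsAlgebraic L b := fun b hb => hCb.isAlgebraic (fun x hx => hKL hx.1) hb
  have hW := hD.det_wronskian_ne_zero_of_linIndepOver hL hηL hind
  have hFD : DiffClosed D (L ⊔ Cb) := hL.sup hD hCbD halg
  have hFC : constantsOf D (L ⊔ Cb) ⊆ Cb :=
    hD.constantsOf_sup_subset hL hCbD halg (hconst ▸ hCb.1)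
  have hcoeff : ∀ j, ∃ γ : Fin n → M, (∀ i, γ i ∈ Cb) ∧ σ ⟨η j, hηL j⟩ = ∑ i, γ i * η i := by
    intro j
    obtain ⟨γ, hγ, h⟩ := hD.exists_const_coeffs_of_isSolution hFD
      (fun i => le_sup_left (a := L) (hηL i)) (hσ.1 _) hsol
      (hσ.isSolution_map hL hKL ha (hηL j) (hsol j)) hW
    exact ⟨γ, fun i => hFC (hγ i), h⟩
  choose γ hγCb hγ using hcoeff
  refine ⟨Matrix.of fun i j => γ j i, fun i j => hγCb j i, hγ,
    hD.det_ne_zero_of_det_wronskian_ne_zero (fun i j => hCbD (hγCb j i)) hγ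
      (hσ.det_wronskian_ne_zero hL hηL hW), fun c' hc' hc'η => ?_⟩
  ext i j
  exact congrFun (hD.eq_of_sum_mul_eq_of_det_wronskian_ne_zero hW (fun i => hCbD (hc' i j))
    (fun i => hCbD (hγCb j i)) ((hc'η j).symm.trans (hγ j))) i

/-- Let `L = K⟨η₁,…,ηₙ⟩` be a Picard-Vessiot extension of `K` with
`η₁,…,ηₙ` linearly independent over the constants `C`, `Cb` an algebraic closure of `C`,
and `L̄ = L ⊔ Cb`.  Every `K`-differential morphism `σ : L → L̄` satisfies
`σ(η_j) = ∑ᵢ c_{ij} η_i` for unique constants `c_{ij} ∈ Cb`, and the matrix `(c_{ij})`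
is invertible, i.e. lies in `GL(n, Cb)`. -/
theorem statement_4 {M : Type*} [Field M] [CharZero M] (D : M → M) (hD : IsDerivation D)
    (K L : Subfield M) (hKdc : DiffClosed D K) (hKL : K ≤ L)
    (n : ℕ) (a : Fin n → M) (η : Fin n → M) (hηL : ∀ j, η j ∈ L)
    (hPV : IsPicardVessiotWith D K L n a η)
    (Cb : Subfield M) (hCb : IsAlgClosureOf (constantsOf D K) Cb) :
    ∀ σ : ↥L →+* M, IsDiffHom D K L (L ⊔ Cb) σ →
      ∃ c : Matrix (Fin n) (Fin n) M,
        (∀ i j, c i j ∈ Cb) ∧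
        (∀ j, σ ⟨η j, hηL j⟩ = ∑ i, c i j * η i) ∧
        c.det ≠ 0 ∧
        ∀ c' : Matrix (Fin n) (Fin n) M, (∀ i j, c' i j ∈ Cb) →
          (∀ j, σ ⟨η j, hηL j⟩ = ∑ i, c' i j * η i) → c' = c :=
  statement_4_general D hD K L hKL n a η hηL hPV Cb hCb
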